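/- arXiv:1405.0002 — 2 statements merged into one kernel-verified Lean document; each statement's English description precedes it below -/
import Mathlib

section
/- Let C_k = x_1 x_2 … x_k x_1 (k ≥ 2) be a non-Hamiltonian cycle in a digraph D, and let Q = y_1 y_2 … y_r (r ≥ 1) be a path in D − V(C_k). If d^-(y_1, C_k) + d^+(y_r, C_k) ≥ k+1, then for every m with r+1 ≤ m ≤ k+r, D contains a cycle C_m of length m with vertex set contained in V(C_k) ∪ V(Q). -/
open Finset

/-- A list of distinct vertices whose consecutive members are joined by arcs. -/
def IsPathList {V : Type*} (A : V → V → Prop) (p : List V) : Prop :=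
  p.Nodup ∧ p.Chain' A

/-- A directed cycle: at least two distinct vertices, consecutive arcs, and an arc
from the last vertex back to the first. -/
def IsCycleList {V : Type*} (A : V → V → Prop) (c : List V) : Prop :=
  2 ≤ c.length ∧ c.Nodup ∧ c.Chain' A ∧ ∀ h : c ≠ [], A (c.getLast h) (c.head h)

/-- A Hamiltonian bypass: a Hamiltonian path `v₁ v₂ … vₙ` together with the arc `v₁ vₙ`. -/
def HasHamBypass {V : Type*} (A : V → V → Prop) : Prop :=
  ∃ l : List V, l.Nodup ∧ (∀ v, v ∈ l) ∧ l.Chain' A ∧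
    ∀ h : l ≠ [], A (l.head h) (l.getLast h)

/-- A Hamiltonian cycle. -/
def HasHamCycle {V : Type*} (A : V → V → Prop) : Prop :=
  ∃ c : List V, IsCycleList A c ∧ ∀ v, v ∈ c

/-- out-degree of `x` towards a set `S`. -/
def outDegOn {V : Type*} [DecidableEq V] (A : V → V → Prop) [DecidableRel A]
    (x : V) (S : Finset V) : ℕ := (S.filter fun y => A x y).card

/-- in-degree of `x` from a set `S`. -/
def inDegOn {V : Type*} [DecidableEq V] (A : V → V → Prop) [DecidableRel A]
    (x : V) (S : Finset V) : ℕ := (S.filter fun y => A y x).card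

/-- degree of `x` with respect to a set `S` (arcs in both directions). -/
def degOn {V : Type*} [DecidableEq V] (A : V → V → Prop) [DecidableRel A]
    (x : V) (S : Finset V) : ℕ := outDegOn A x S + inDegOn A x S

/-- out-degree of `x`. -/
def outDeg {V : Type*} [Fintype V] [DecidableEq V] (A : V → V → Prop) [DecidableRel A]
    (x : V) : ℕ := outDegOn A x Finset.univ

/-- in-degree of `x`. -/
def inDeg {V : Type*} [Fintype V] [DecidableEq V] (A : V → V → Prop) [DecidableRel A]
    (x : V) : ℕ := inDegOn A x Finset.univ

/-- degree of `x`. -/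
def deg {V : Type*} [Fintype V] [DecidableEq V] (A : V → V → Prop) [DecidableRel A]
    (x : V) : ℕ := outDeg A x + inDeg A x

/-- The condition `A_k` of Manoussakis: for every triple of distinct vertices `x, y, z`
with `x` and `y` non-adjacent, if `xz` is not an arc then
`d(x)+d(y)+d⁺(x)+d⁻(z) ≥ 3n-2+k`, and if `zx` is not an arc then
`d(x)+d(y)+d⁻(x)+d⁺(z) ≥ 3n-2+k`. -/
def CondA {V : Type*} [Fintype V] [DecidableEq V] (A : V → V → Prop) [DecidableRel A]
    (k : ℤ) : Prop :=
  ∀ x y z : V, x ≠ y → z ≠ x → z ≠ y → ¬A x y → ¬A y x →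
    (¬A x z → (deg A x + deg A y + outDeg A x + inDeg A z : ℤ) ≥
      3 * (Fintype.card V : ℤ) - 2 + k) ∧
    (¬A z x → (deg A x + deg A y + inDeg A x + outDeg A z : ℤ) ≥
      3 * (Fintype.card V : ℤ) - 2 + k)


/-!
Put `s = m - r ∈ [1, k]`. The indices `i` with `x_i → y_1` and the indices `j` with `y_r → x_j`,
shifted cyclically by `s - 1`, number more than `k` together, so by pigeonhole some `j` has
`y_r → x_j` and `x_{j+s-1} → y_1`. Then `x_j x_{j+1} … x_{j+s-1} y_1 … y_r x_j` is a cycle of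
length `s + r = m`.
-/

section

variable {V : Type*} {A : V → V → Prop}

theorem IsCycleList.cycle_chain {c : List V} (hc : IsCycleList A c) :
    Cycle.Chain A (c : Cycle V) := by
  obtain ⟨hlen, -, hchain, hclose⟩ := hc
  have hne : c ≠ [] := List.ne_nil_of_length_pos (by omega)
  rw [Cycle.chain_ne_nil A hne, List.isChain_cons, List.head?_eq_some_head hne]
  exact ⟨by simpa using hclose hne, hchain⟩

theorem Cycle.Chain.isChain_rotate {l : List V} (h : Cycle.Chain A (l : Cycle V)) (n : ℕ) :
    (l.rotate n).IsChain A := by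
  rcases eq_or_ne (l.rotate n) [] with hnil | hne
  · simp [hnil]
  rw [← Cycle.coe_eq_coe.mpr (List.IsRotated.forall l n), Cycle.chain_ne_nil A hne] at h
  exact h.tail

theorem IsCycleList.exists_isPathList_get_add {c : List V} (hc : IsCycleList A c)
    (j d : Fin c.length) :
    ∃ p : List V, IsPathList A p ∧ p.length = d + 1 ∧ p ⊆ c ∧
      ∃ hp : p ≠ [], p.head hp = c.get j ∧ p.getLast hp = c.get (j + d) := by
  set p := (c.rotate j).take (d + 1)
  have hlen : p.length = d + 1 := by simp [p]
  have hp : p ≠ [] := List.ne_nil_of_length_pos (by omega)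
  refine ⟨p, ⟨?_, ?_⟩, hlen, ?_, hp, ?_, ?_⟩
  · exact (List.nodup_rotate.mpr hc.2.1).sublist (List.take_sublist _ _)
  · exact (hc.cycle_chain.isChain_rotate j).take _
  · exact fun v hv => (List.IsRotated.forall c j).perm.subset (List.take_subset _ _ hv)
  · rw [List.head_eq_getElem]
    simp [p, Nat.mod_eq_of_lt j.isLt]
  · rw [List.getLast_eq_getElem]
    simp [p, hlen, Fin.val_add, Nat.add_comm]

theorem IsPathList.isCycleList_append {p q : List V} (hp : IsPathList A p) (hq : IsPathList A q)
    (hdisj : p.Disjoint q) (hp0 : p ≠ []) (hq0 : q ≠ [])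
    (hpq : A (p.getLast hp0) (q.head hq0)) (hqp : A (q.getLast hq0) (p.head hp0)) :
    IsCycleList A (p ++ q) := by
  refine ⟨?_, hp.1.append hq.1 hdisj, ?_, fun _ => ?_⟩
  · have := List.length_pos_of_ne_nil hp0
    have := List.length_pos_of_ne_nil hq0
    simp only [List.length_append]; omega
  · refine List.isChain_append.mpr ⟨hp.2, hq.2, ?_⟩
    simpa [List.getLast?_eq_some_getLast hp0, List.head?_eq_some_head hq0] using hpq
  · simpa [List.getLast_append_of_right_ne_nil p q hq0, List.head_append_of_ne_nil hp0] using hqp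

theorem Fin.exists_mem_add_mem_of_lt_card_add_card {k : ℕ} {S T : Finset (Fin k)}
    (h : k < #S + #T) (d : Fin k) : ∃ j ∈ T, j + d ∈ S := by
  have hmap : #(T.map (addRightEmbedding d)) = #T := card_map _
  obtain ⟨i, hi⟩ := inter_nonempty_of_card_lt_card_add_card (subset_univ S)
    (subset_univ (T.map (addRightEmbedding d))) (by simpa [hmap] using h)
  obtain ⟨hiS, hiT⟩ := mem_inter.mp hi
  obtain ⟨j, hj, rfl⟩ := mem_map.mp hiT
  exact ⟨j, hj, hiS⟩

theorem List.Nodup.card_filter_toFinset [DecidableEq V] {l : List V} (hl : l.Nodup)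
    (P : V → Prop) [DecidablePred P] :
    #(l.toFinset.filter P) = #(univ.filter fun i : Fin l.length => P (l.get i)) := by
  have : l.toFinset = univ.image l.get := by ext; simp [List.mem_iff_get]
  rw [this, filter_image, card_image_of_injective _ (List.nodup_iff_injective_get.mp hl)]

end

theorem stmt3_general {V : Type*} [DecidableEq V] (A : V → V → Prop) [DecidableRel A]
    (c : List V) (hc : IsCycleList A c)
    (q : List V) (hq : IsPathList A q) (hr : 1 ≤ q.length)
    (hdisj : ∀ v ∈ q, v ∉ c)
    (hd : ∀ h : q ≠ [],
      c.length + 1 ≤ inDegOn A (q.head h) c.toFinset + outDegOn A (q.getLast h) c.toFinset) :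
    ∀ m, q.length + 1 ≤ m → m ≤ c.length + q.length →
      ∃ c' : List V, IsCycleList A c' ∧ c'.length = m ∧
        c'.toFinset ⊆ c.toFinset ∪ q.toFinset := by
  intro m hm1 hm2
  have hq0 : q ≠ [] := List.ne_nil_of_length_pos hr
  have hcard : c.length < #(univ.filter fun i : Fin c.length => A (c.get i) (q.head hq0)) +
      #(univ.filter fun j : Fin c.length => A (q.getLast hq0) (c.get j)) := by
    have := hd hq0
    rwa [inDegOn, outDegOn, hc.2.1.card_filter_toFinset, hc.2.1.card_filter_toFinset] at this
  obtain ⟨j, hjT, hjS⟩ :=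
    Fin.exists_mem_add_mem_of_lt_card_add_card hcard ⟨m - q.length - 1, by omega⟩
  obtain ⟨p, hp, hplen, hpc, hp0, hhead, hlast⟩ := hc.exists_isPathList_get_add j _
  refine ⟨p ++ q, hp.isCycleList_append hq ?_ hp0 hq0 ?_ ?_, ?_, ?_⟩
  · exact fun v hvp hvq => hdisj v hvq (hpc hvp)
  · simpa [hlast] using hjS
  · simpa [hhead] using hjT
  · simp only [List.length_append, hplen]; omega
  · intro v hv
    simp only [List.toFinset_append, mem_union, List.mem_toFinset] at hv ⊢
    exact hv.imp_left (@hpc v)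

/-- Lemma 3. -/
theorem stmt3 {V : Type*} [Fintype V] [DecidableEq V] (A : V → V → Prop) [DecidableRel A]
    (hirr : ∀ v, ¬A v v)
    (c : List V) (hc : IsCycleList A c) (hnonham : ∃ v, v ∉ c)
    (q : List V) (hq : IsPathList A q) (hr : 1 ≤ q.length)
    (hdisj : ∀ v ∈ q, v ∉ c)
    (hd : ∀ h : q ≠ [],
      c.length + 1 ≤ inDegOn A (q.head h) c.toFinset + outDegOn A (q.getLast h) c.toFinset) :
    ∀ m, q.length + 1 ≤ m → m ≤ c.length + q.length →
      ∃ c' : List V, IsCycleList A c' ∧ c'.length = m ∧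
        c'.toFinset ⊆ c.toFinset ∪ q.toFinset :=
  stmt3_general A c hc q hq hr hdisj hd
end

section
/- Let D be a digraph of order n ≥ 3 containing a cycle C of length n−1, with y the vertex not on C. If d(y) ≥ n, then D contains a Hamiltonian bypass. -/
open Finset

/-!
Since there are no loops, every arc at `y` joins `y` to the cycle `C = c₀ c₁ … c_{m-1}`
(`m = n - 1`), and a set of positions on `C` containing no two cyclically consecutive ones has
at most `m / 2` elements. Since `d(y) ≥ n > m`, some consecutive pair `cᵢ, cᵢ₊₁` either both
dominate `y` or are both dominated by `y`. In the first case `cᵢ₊₁ … cᵢ y` with the arc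
`cᵢ₊₁ y` is a Hamiltonian bypass, in the second `y cᵢ₊₁ … cᵢ` with the arc `y cᵢ`.
-/

theorem Finset.two_mul_card_le_of_injective {α : Type*} [Fintype α] {f : α → α}
    (hf : Function.Injective f) {s : Finset α} (h : ∀ a ∈ s, f a ∉ s) :
    2 * #s ≤ Fintype.card α := by
  have hdisj : Disjoint s (s.map ⟨f, hf⟩) := by
    rw [Finset.disjoint_right]
    simp only [mem_map, Function.Embedding.coeFn_mk, forall_exists_index, and_imp]
    rintro _ a ha rfl
    exact h a ha
  calc 2 * #s = #(s.disjUnion (s.map ⟨f, hf⟩) hdisj) := by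
        rw [card_disjUnion, card_map, two_mul]
    _ ≤ Fintype.card α := card_le_univ _

theorem val_finRotate {n : ℕ} (i : Fin n) : (finRotate n i : ℕ) = (i + 1) % n := by
  have := i.neZero
  rw [finRotate_apply, Fin.val_add, Fin.val_one', Nat.add_mod_mod]

namespace List

variable {α : Type*} {l : List α}

theorem head?_rotate_succ (i : Fin l.length) :
    (l.rotate (i + 1)).head? = some (l.get (finRotate _ i)) := by
  have hi := (finRotate _ i).isLt
  rw [val_finRotate] at hi
  rw [head?_eq_getElem?, getElem?_rotate i.pos, Nat.zero_add, get_eq_getElem]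
  simp only [val_finRotate, getElem?_eq_getElem hi]

theorem getLast?_rotate_succ (i : Fin l.length) :
    (l.rotate (i + 1)).getLast? = some (l.get i) := by
  have hi := i.isLt
  rw [getLast?_eq_getElem?, length_rotate, getElem?_rotate (by omega),
    show l.length - 1 + (i + 1) = l.length + i by omega, Nat.add_mod_left,
    Nat.mod_eq_of_lt hi, get_eq_getElem, getElem?_eq_getElem]

end List

namespace IsCycleList

variable {V : Type*} {A : V → V → Prop} {c : List V}

theorem isChain_rotate (hc : IsCycleList A c) (k : ℕ) : (c.rotate k).IsChain A := by
  obtain ⟨-, -, hchain, hclose⟩ := hc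
  rw [List.rotate_eq_drop_append_take_mod]
  refine List.isChain_append.2 ⟨hchain.drop _, hchain.take _, ?_⟩
  intro a ha b hb
  rw [List.getLast?_drop] at ha
  rw [List.head?_take] at hb
  split_ifs at ha hb <;> simp only [Option.mem_def, reduceCtorEq] at ha hb
  rw [← List.getLast_of_mem_getLast? ha, ← List.head_of_mem_head? hb]
  exact hclose _

theorem isPathList_rotate (hc : IsCycleList A c) (k : ℕ) : IsPathList A (c.rotate k) :=
  ⟨List.nodup_rotate.2 hc.2.1, hc.isChain_rotate k⟩

end IsCycleList

section Bypass

variable {V : Type*} {A : V → V → Prop} {p : List V} {y u w : V}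

theorem hasHamBypass_of_path_ends_to (hp : IsPathList A p) (hy : y ∉ p)
    (hcover : ∀ v, v ≠ y → v ∈ p) (hu : p.head? = some u) (hw : p.getLast? = some w)
    (huy : A u y) (hwy : A w y) : HasHamBypass A := by
  have hne : p ≠ [] := by rintro rfl; simp at hu
  refine ⟨p ++ [y], ?_, ?_, ?_, fun _ => ?_⟩
  · simpa [List.nodup_append] using ⟨hp.1, fun a ha hay => hy (hay ▸ ha)⟩
  · intro v
    by_cases hv : v = y <;> simp [hv, hcover]
  · refine List.isChain_append.2 ⟨hp.2, List.isChain_singleton y, ?_⟩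
    simp_all
  · rwa [List.head_append_of_ne_nil hne, List.head_of_head?_eq_some hu, List.getLast_concat]

theorem hasHamBypass_of_path_ends_from (hp : IsPathList A p) (hy : y ∉ p)
    (hcover : ∀ v, v ≠ y → v ∈ p) (hu : p.head? = some u) (hw : p.getLast? = some w)
    (hyu : A y u) (hyw : A y w) : HasHamBypass A := by
  have hne : p ≠ [] := by rintro rfl; simp at hu
  refine ⟨y :: p, List.nodup_cons.2 ⟨hy, hp.1⟩, ?_, ?_, fun _ => ?_⟩
  · intro v
    by_cases hv : v = y <;> simp [hv, hcover]
  · exact List.isChain_cons.2 ⟨by simpa [hu], hp.2⟩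
  · rwa [List.getLast_cons hne, List.getLast_of_getLast?_eq_some hw, List.head_cons]

end Bypass

section Degree

variable {V : Type*} [Fintype V] {c : List V} {y : V}

theorem List.Nodup.card_filter_get (hc : c.Nodup) (hcover : ∀ v, v ≠ y → v ∈ c)
    {P : V → Prop} [DecidablePred P] (hy : ¬P y) :
    #{i : Fin c.length | P (c.get i)} = #{v | P v} := by
  refine card_nbij c.get (fun i hi => by simpa using hi) ?_ ?_
  · exact fun i _ j _ hij => List.nodup_iff_injective_get.1 hc hij
  · intro v hv
    obtain ⟨i, rfl⟩ := List.mem_iff_get.1 (hcover v (by rintro rfl; simp_all))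
    exact ⟨i, by simpa using hv, rfl⟩

variable [DecidableEq V] {A : V → V → Prop} [DecidableRel A]

theorem exists_consecutive_adj_of_length_lt_deg (hyy : ¬A y y) (hc : c.Nodup)
    (hcover : ∀ v, v ≠ y → v ∈ c) (hd : c.length < deg A y) :
    ∃ i : Fin c.length, (A (c.get i) y ∧ A (c.get (finRotate _ i)) y) ∨
      (A y (c.get i) ∧ A y (c.get (finRotate _ i))) := by
  by_contra! hno
  have hin := two_mul_card_le_of_injective (finRotate c.length).injective
    (s := {i | A (c.get i) y}) (by simpa using fun i => (hno i).1)
  have hout := two_mul_card_le_of_injective (finRotate c.length).injective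
    (s := {i | A y (c.get i)}) (by simpa using fun i => (hno i).2)
  rw [hc.card_filter_get hcover (P := (A · y)) hyy, Fintype.card_fin] at hin
  rw [hc.card_filter_get hcover (P := A y) hyy, Fintype.card_fin] at hout
  unfold deg outDeg inDeg outDegOn inDegOn at hd
  omega

end Degree

theorem List.Nodup.mem_of_length_eq_card_sub_one {V : Type*} [Fintype V] [DecidableEq V]
    {c : List V} (hc : c.Nodup) (hlen : c.length = Fintype.card V - 1) {y : V} (hy : y ∉ c)
    {v : V} (hv : v ≠ y) : v ∈ c := by
  have hcard : #(insert y c.toFinset) = Fintype.card V := by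
    rw [card_insert_of_notMem (by simpa using hy), List.toFinset_card_of_nodup hc, hlen]
    have := Fintype.card_pos_iff.2 ⟨y⟩
    omega
  have hmem := mem_univ v
  rw [← eq_univ_of_card _ hcard] at hmem
  simpa [hv] using hmem

theorem stmt17_general {V : Type*} [Fintype V] [DecidableEq V] (A : V → V → Prop) [DecidableRel A]
    (hirr : ∀ v, ¬A v v)
    (c : List V) (hc : IsCycleList A c) (hlen : c.length = Fintype.card V - 1)
    (y : V) (hy : y ∉ c)
    (hd : Fintype.card V ≤ deg A y) :
    HasHamBypass A := by
  have hcover : ∀ v, v ≠ y → v ∈ c := fun _ => hc.2.1.mem_of_length_eq_card_sub_one hlen hy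
  obtain ⟨i, hends⟩ :=
    exists_consecutive_adj_of_length_lt_deg (hirr y) hc.2.1 hcover (by have := hc.1; omega)
  have hpath := hc.isPathList_rotate (i + 1)
  have hyp : y ∉ c.rotate (i + 1) := List.mem_rotate.not.2 hy
  have hcover' : ∀ v, v ≠ y → v ∈ c.rotate (i + 1) := fun v hv => List.mem_rotate.2 (hcover v hv)
  rcases hends with hin | hout
  · exact hasHamBypass_of_path_ends_to hpath hyp hcover' (List.head?_rotate_succ i)
      (List.getLast?_rotate_succ i) hin.2 hin.1
  · exact hasHamBypass_of_path_ends_from hpath hyp hcover' (List.head?_rotate_succ i)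
      (List.getLast?_rotate_succ i) hout.2 hout.1

/-- good cycles give Hamiltonian bypasses. -/
theorem stmt17 {V : Type*} [Fintype V] [DecidableEq V] (A : V → V → Prop) [DecidableRel A]
    (hirr : ∀ v, ¬A v v) (hn : 3 ≤ Fintype.card V)
    (c : List V) (hc : IsCycleList A c) (hlen : c.length = Fintype.card V - 1)
    (y : V) (hy : y ∉ c)
    (hd : Fintype.card V ≤ deg A y) :
    HasHamBypass A :=
  stmt17_general A hirr c hc hlen y hy hd
end
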